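/- arXiv:2305.19955 — 4 statements merged into one kernel-verified Lean document; each statement's English description precedes it below -/
import Mathlib

section
/- Let N be a finite group, α an automorphism of N, and n a positive integer. Then the following are equivalent: (1) there exists a finite group H containing N as a normal subgroup with H/N cyclic of order n generated by xN for some x ∈ H such that conjugation by x on N equals α; (2) there exists an element x ∈ N with α(x) = x and such that αⁿ equals conjugation by x on N. -/
/-!
If `x` acts on `N` by `α` and `xⁿ = x₀ ∈ N`, then `x` commutes with `xⁿ`, so `α x₀ = x₀`, and
conjugation by `xⁿ` is `αⁿ`.

Conversely, the extension is the group `⟨N, t | t g t⁻¹ = α g, tⁿ = x⟩`, realised as the quotient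
of `N ⋊_α ℤ` by the normal closure of the relator `x⁻¹ tⁿ`. The conditions `α x = x` and
`αⁿ = conj x` say precisely that the relator is central, so its normal closure is its cyclic span,
which meets `N` trivially because the relator has `ℤ`-component `n ≠ 0`. Every element is
`g tᵏ` with `0 ≤ k < n` since `tⁿ ∈ N`, and the projection onto `ℤ/n` shows that `tᵏ ∈ N` only
when `n ∣ k`.
-/

open SemidirectProduct Function

section Forward

variable {N H : Type*} [Group N] [Group H] {ι : N →* H} {α : MulAut N} {x : H}

theorem pow_conj_eq_of_conj_eq (hconj : ∀ g, x * ι g * x⁻¹ = ι (α g)) (k : ℕ) (g : N) :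
    x ^ k * ι g * (x ^ k)⁻¹ = ι ((α ^ k) g) := by
  induction k generalizing g with
  | zero => simp
  | succ k ih =>
    calc x ^ (k + 1) * ι g * (x ^ (k + 1))⁻¹ = x * (x ^ k * ι g * (x ^ k)⁻¹) * x⁻¹ := by group
      _ = ι ((α ^ (k + 1)) g) := by rw [ih, hconj, pow_succ', MulAut.mul_apply]

theorem apply_eq_and_pow_eq_conj_of_map_eq_pow (hι : Injective ι)
    (hconj : ∀ g, x * ι g * x⁻¹ = ι (α g)) {n : ℕ} {x₀ : N} (hx₀ : ι x₀ = x ^ n) :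
    α x₀ = x₀ ∧ ∀ g, (α ^ n) g = x₀ * g * x₀⁻¹ := by
  refine ⟨hι ?_, fun g => hι ?_⟩
  · rw [← hconj, hx₀]
    group
  · rw [← pow_conj_eq_of_conj_eq hconj, map_mul, map_mul, map_inv, hx₀]

end Forward

section Construction

variable {N : Type*} [Group N] (α : MulAut N) (x : N) (n : ℕ)

abbrev IntSemidirect := N ⋊[zpowersHom (MulAut N) α] Multiplicative ℤ

def CyclicExtension.relator : IntSemidirect α := inl x⁻¹ * inr (.ofAdd (n : ℤ))

abbrev CyclicExtension := IntSemidirect α ⧸ Subgroup.normalClosure {CyclicExtension.relator α x n}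

end Construction

namespace CyclicExtension

variable {N : Type*} [Group N] (α : MulAut N) (x : N) (n : ℕ)

def incl : N →* CyclicExtension α x n := (QuotientGroup.mk' _).comp inl

def gen : CyclicExtension α x n := QuotientGroup.mk (inr (.ofAdd 1))

@[simp]
theorem incl_apply (g : N) :
    incl α x n g = ((inl g : IntSemidirect α) : CyclicExtension α x n) := rfl

variable {α x n}

theorem gen_mul_incl_mul_gen_inv (g : N) :
    gen α x n * incl α x n g * (gen α x n)⁻¹ = incl α x n (α g) := by
  rw [gen, incl_apply, incl_apply, ← QuotientGroup.mk_inv, ← QuotientGroup.mk_mul,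
    ← QuotientGroup.mk_mul, ← map_inv, ← inl_aut, zpowersHom_apply, toAdd_ofAdd, zpow_one]

theorem gen_zpow (k : ℤ) : gen α x n ^ k = QuotientGroup.mk (inr (.ofAdd k)) := by
  rw [gen, ← QuotientGroup.mk_zpow, ← map_zpow, ← ofAdd_zsmul, smul_eq_mul, mul_one]

theorem mk_eq_incl_mul_gen_zpow (w : IntSemidirect α) :
    (w : CyclicExtension α x n) = incl α x n w.left * gen α x n ^ w.right.toAdd := by
  rw [gen_zpow, ofAdd_toAdd, incl, MonoidHom.comp_apply, QuotientGroup.mk'_apply,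
    ← QuotientGroup.mk_mul, inl_left_mul_inr_right]

theorem gen_pow_eq_incl : gen α x n ^ n = incl α x n x := by
  rw [eq_comm, ← inv_mul_eq_one, ← zpow_natCast, gen_zpow, incl_apply, ← QuotientGroup.mk_inv,
    ← QuotientGroup.mk_mul, QuotientGroup.eq_one_iff, ← map_inv]
  exact Subgroup.subset_normalClosure rfl

theorem exists_eq_incl_mul_gen_pow (hn : 0 < n) (h : CyclicExtension α x n) :
    ∃ (g : N), ∃ k < n, h = incl α x n g * gen α x n ^ k := by
  obtain ⟨w, rfl⟩ := QuotientGroup.mk_surjective h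
  set s := w.right.toAdd
  have hn' : (0 : ℤ) < n := by exact_mod_cast hn
  have hs : gen α x n ^ s = incl α x n (x ^ (s / n)) * gen α x n ^ (s % n).toNat :=
    calc gen α x n ^ s = gen α x n ^ ((n : ℤ) * (s / n) + s % n) := by rw [Int.mul_ediv_add_emod]
      _ = (gen α x n ^ n) ^ (s / n) * gen α x n ^ (s % n) := by
        rw [zpow_add, zpow_mul, zpow_natCast]
      _ = incl α x n (x ^ (s / n)) * gen α x n ^ (s % n).toNat := by
        rw [gen_pow_eq_incl, map_zpow, ← zpow_natCast,
          Int.toNat_of_nonneg (Int.emod_nonneg _ hn'.ne')]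
  have hlt : (s % n).toNat < n := by
    have := Int.emod_lt_of_pos s hn'
    omega
  refine ⟨w.left * x ^ (s / n), _, hlt, ?_⟩
  rw [mk_eq_incl_mul_gen_zpow, hs, map_mul, mul_assoc]

theorem finite [Finite N] (hn : 0 < n) : Finite (CyclicExtension α x n) := by
  refine Finite.of_surjective (fun p : N × Fin n => incl α x n p.1 * gen α x n ^ (p.2 : ℕ)) ?_
  intro h
  obtain ⟨g, k, hk, rfl⟩ := exists_eq_incl_mul_gen_pow hn h
  exact ⟨(g, ⟨k, hk⟩), rfl⟩

theorem range_incl_normal : (incl α x n).range.Normal := by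
  rw [incl, MonoidHom.range_comp, range_inl_eq_ker_rightHom]
  exact (MonoidHom.normal_ker _).map _ (QuotientGroup.mk'_surjective _)

def toZMod : CyclicExtension α x n →* Multiplicative (ZMod n) :=
  QuotientGroup.lift _ ((AddMonoidHom.toMultiplicative (Int.castAddHom (ZMod n))).comp rightHom) <|
    Subgroup.normalClosure_le_normal <| by
      simp [relator]

theorem gen_pow_mem_range_incl_iff (k : ℕ) : gen α x n ^ k ∈ (incl α x n).range ↔ n ∣ k := by
  constructor
  · rintro ⟨g, hg⟩
    have := congrArg toZMod hg
    simp only [toZMod, incl_apply, QuotientGroup.lift_mk, MonoidHom.coe_comp,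
      AddMonoidHom.coe_toMultiplicative, Int.coe_castAddHom, rightHom_eq_right, comp_apply,
      right_inl, toAdd_one, Int.cast_zero, ofAdd_zero, gen, map_pow, right_inr, toAdd_ofAdd,
      Int.cast_one] at this
    rw [← ofAdd_nsmul, nsmul_one, eq_comm, ofAdd_eq_one, ZMod.natCast_eq_zero_iff] at this
    exact this
  · rintro ⟨c, rfl⟩
    exact ⟨x ^ c, by rw [pow_mul, gen_pow_eq_incl, map_pow]⟩

theorem relator_mem_center (hx : α x = x) (hxn : ∀ g, (α ^ n) g = x * g * x⁻¹) :
    relator α x n ∈ Subgroup.center (IntSemidirect α) := by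
  have hinl : ∀ g, Commute (inl g) (relator α x n) := by
    intro g
    ext
    · simp only [relator, map_inv, mul_left, left_inl, right_inl, zpowersHom_apply, toAdd_one,
        zpow_ofNat, pow_zero, inv_left, inv_one, MulAut.one_apply, inv_right, left_inr, mul_one,
        mul_right, right_inr, one_mul, toAdd_ofAdd, zpow_natCast, hxn]
      group
    · simp [relator]
  have hinr : Commute (inr (.ofAdd 1)) (relator α x n) := by
    ext <;> simp [relator, hx, add_comm]
  refine Subgroup.mem_center_iff.mpr fun w => ?_
  have hw : (inr w.right : IntSemidirect α) = inr (.ofAdd 1) ^ w.right.toAdd := by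
    rw [← map_zpow, ← ofAdd_zsmul, smul_eq_mul, mul_one, ofAdd_toAdd]
  rw [← inl_left_mul_inr_right w, hw]
  exact (hinl _).mul_left (hinr.zpow_left _)

theorem normalClosure_relator (hx : α x = x) (hxn : ∀ g, (α ^ n) g = x * g * x⁻¹) :
    Subgroup.normalClosure {relator α x n} = Subgroup.zpowers (relator α x n) := by
  have hcentral : Subgroup.zpowers (relator α x n) ≤ Subgroup.center _ :=
    Subgroup.zpowers_le.mpr (relator_mem_center hx hxn)
  have : (Subgroup.zpowers (relator α x n)).Normal := ⟨fun a ha g => by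
    rw [Subgroup.mem_center_iff.mp (hcentral ha) g, mul_inv_cancel_right]
    exact ha⟩
  exact le_antisymm (Subgroup.normalClosure_le_normal (by simp))
    (Subgroup.zpowers_le.mpr (Subgroup.subset_normalClosure rfl))

theorem incl_injective (hn : 0 < n) (hx : α x = x) (hxn : ∀ g, (α ^ n) g = x * g * x⁻¹) :
    Injective (incl α x n) := by
  rw [injective_iff_map_eq_one]
  intro g hg
  rw [incl_apply, QuotientGroup.eq_one_iff, normalClosure_relator hx hxn] at hg
  obtain ⟨m, hm⟩ := Subgroup.mem_zpowers_iff.mp hg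
  have hright := congrArg rightHom hm
  rw [map_zpow, relator, map_mul, rightHom_inl, rightHom_inr, one_mul, rightHom_inl] at hright
  rw [← ofAdd_zsmul, ofAdd_eq_one, smul_eq_mul, mul_eq_zero] at hright
  have hm0 : m = 0 := hright.resolve_right (by omega)
  rw [hm0, zpow_zero, ← map_one inl] at hm
  exact (inl_injective hm).symm

end CyclicExtension

/-- Let `N` be a finite group, `α` an automorphism of `N` and `n ≥ 1`.
Then the following are equivalent:
(1) there is a finite group `H` containing `N` as a normal subgroup (via an embedding `ι`)
with `H/N` cyclic of order `n`, generated by `xN` for some `x ∈ H` whose conjugation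
action on `N` is `α`;
(2) there is `x ∈ N` with `α(x) = x` and `αⁿ` equal to conjugation by `x`. -/
theorem extension_criterion (N : Type) [Group N] [Finite N] (α : MulAut N) (n : ℕ)
    (hn : 0 < n) :
    (∃ (H : Type) (_ : Group H) (_ : Finite H) (ι : N →* H) (x : H),
      Function.Injective ι ∧ ι.range.Normal ∧
      (∀ g : N, x * ι g * x⁻¹ = ι (α g)) ∧
      (∀ h : H, ∃ (g : N) (k : ℕ), h = ι g * x ^ k) ∧
      (∀ k : ℕ, x ^ k ∈ ι.range ↔ n ∣ k)) ↔
    (∃ x : N, α x = x ∧ ∀ g : N, (α ^ n) g = x * g * x⁻¹) := by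
  constructor
  · rintro ⟨H, _, _, ι, x, hι, -, hconj, -, hpow⟩
    obtain ⟨x₀, hx₀⟩ := (hpow n).mpr dvd_rfl
    exact ⟨x₀, apply_eq_and_pow_eq_conj_of_map_eq_pow hι hconj hx₀⟩
  · rintro ⟨x, hx, hxn⟩
    refine ⟨CyclicExtension α x n, inferInstance, CyclicExtension.finite hn,
      CyclicExtension.incl α x n, CyclicExtension.gen α x n,
      CyclicExtension.incl_injective hn hx hxn, CyclicExtension.range_incl_normal,
      CyclicExtension.gen_mul_incl_mul_gen_inv, fun h => ?_,
      CyclicExtension.gen_pow_mem_range_incl_iff⟩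
    obtain ⟨g, k, -, hk⟩ := CyclicExtension.exists_eq_incl_mul_gen_pow hn h
    exact ⟨g, k, hk⟩
end

section
/- Let K be a finite group and q a positive integer. Define W = {(x₁,…,x_q) ∈ Z(K)^q : x₁⋯x_q = 1} ≤ Z(K^q) and U = K^q / W. Then Z(U) = Z(K)^q / W, which is isomorphic to Z(K), and U/Z(U) is isomorphic to (K/Z(K))^q. -/
open scoped BigOperators
open scoped IsMulCommutative

variable (K : Type) [Group K] (q : ℕ)

/-- The product map `Z(K)^q → Z(K)`, a homomorphism since the center is commutative. -/
noncomputable def centerProdHom : (Fin q → Subgroup.center K) →* Subgroup.center K where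
  toFun x := ∏ i, x i
  map_one' := by simp
  map_mul' x y := by simp [Finset.prod_mul_distrib]

/-- The canonical embedding `Z(K)^q → K^q`. -/
noncomputable def centerPiEmbed : (Fin q → Subgroup.center K) →* (Fin q → K) :=
  Pi.monoidHom fun i => (Subgroup.center K).subtype.comp
    (Pi.evalMonoidHom (fun _ => Subgroup.center K) i)

/-- `W = {(x₁,…,x_q) ∈ Z(K)^q : x₁⋯x_q = 1}`, as a subgroup of `K^q`. -/
noncomputable def Wsub : Subgroup (Fin q → K) :=
  (centerProdHom K q).ker.map (centerPiEmbed K q)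

instance : (Wsub K q).Normal := by
  constructor
  rintro w hw g
  obtain ⟨y, hy, rfl⟩ := hw
  have h : g * centerPiEmbed K q y * g⁻¹ = centerPiEmbed K q y := by
    funext i
    show g i * (y i : K) * (g i)⁻¹ = (y i : K)
    rw [Subgroup.mem_center_iff.mp (y i).2 (g i), mul_inv_cancel_right]
  rw [h]
  exact ⟨y, hy, rfl⟩

/-! If `g ∈ K^q` is central modulo `W`, then for each `i` and `k ∈ K` the commutator of `g` with
`Pi.mulSingle i k` is an element of `W` supported on the single coordinate `i`; but the entries
of an element of `W` multiply to `1`, so it is trivial and `g i` commutes with `k`. Hence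
`Z(U) = Z(K)^q / W`, which the product map `Z(K)^q → Z(K)` (onto as soon as `q > 0`, with
kernel `W`) identifies with `Z(K)`, and the third isomorphism theorem gives
`U / Z(U) ≅ K^q / Z(K)^q ≅ (K / Z(K))^q`. -/

open Subgroup QuotientGroup

theorem Subgroup.map_center_le_center_of_surjective {G H : Type*} [Group G] [Group H]
    {f : G →* H} (hf : Function.Surjective f) : (center G).map f ≤ center H := by
  rintro _ ⟨g, hg, rfl⟩
  refine mem_center_iff.mpr fun h => ?_
  obtain ⟨h, rfl⟩ := hf h
  rw [← map_mul, ← map_mul, mem_center_iff.mp hg h]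

section PiQuotient

variable {ι : Type*} {G : ι → Type*} [∀ i, Group (G i)]
  (N : ∀ i, Subgroup (G i)) [∀ i, (N i).Normal]

theorem QuotientGroup.ker_piMap_mk' :
    (MonoidHom.piMap fun i => mk' (N i)).ker = pi Set.univ N := by
  ext x
  simp [funext_iff, mem_pi]

instance Subgroup.pi_univ_normal : (pi Set.univ N).Normal :=
  ker_piMap_mk' N ▸ MonoidHom.normal_ker _

noncomputable def QuotientGroup.quotientPiEquivPiQuotient :
    (Π i, G i) ⧸ pi Set.univ N ≃* Π i, G i ⧸ N i :=
  (quotientMulEquivOfEq (ker_piMap_mk' N).symm).trans <|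
    quotientKerEquivOfSurjective _ fun y => ⟨fun i => (y i).out, funext fun i => (y i).out_eq'⟩

end PiQuotient

@[simp]
theorem centerPiEmbed_apply (y : Fin q → center K) (i : Fin q) : centerPiEmbed K q y i = y i :=
  rfl

theorem centerPiEmbed_injective : Function.Injective (centerPiEmbed K q) :=
  fun _ _ h => funext fun i => Subtype.ext (congrFun h i)

theorem range_centerPiEmbed :
    (centerPiEmbed K q).range = pi Set.univ fun _ => center K := by
  ext x
  refine ⟨?_, fun hx => ⟨fun i => ⟨x i, (mem_pi _).mp hx i trivial⟩, rfl⟩⟩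
  rintro ⟨y, rfl⟩
  exact (mem_pi _).mpr fun i _ => (y i).2

theorem Wsub_le_pi_center : Wsub K q ≤ pi Set.univ fun _ => center K :=
  range_centerPiEmbed K q ▸ map_le_range _ _

theorem centerProdHom_mulSingle (i : Fin q) (z : center K) :
    centerProdHom K q (Pi.mulSingle i z) = z :=
  Finset.prod_pi_mulSingle' i z Finset.univ |>.trans (if_pos (Finset.mem_univ i))

theorem centerProdHom_surjective (hq : 0 < q) : Function.Surjective (centerProdHom K q) :=
  fun z => ⟨Pi.mulSingle ⟨0, hq⟩ z, centerProdHom_mulSingle K q _ z⟩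

theorem mulSingle_mem_Wsub_iff (i : Fin q) (x : K) : Pi.mulSingle i x ∈ Wsub K q ↔ x = 1 := by
  refine ⟨fun ⟨y, hy, hyx⟩ => ?_, fun hx => by simp [hx, one_mem]⟩
  have hy_single : y = Pi.mulSingle i (y i) := by
    funext j
    by_cases hj : j = i
    · subst hj; simp
    · exact Subtype.ext (by simpa [hj] using congrFun hyx j)
  have hyi : y i = 1 := by
    rw [← centerProdHom_mulSingle K q i (y i), ← hy_single]
    exact hy
  simpa [hyi] using (congrFun hyx i).symm

theorem center_quotient_Wsub :
    center ((Fin q → K) ⧸ Wsub K q) = (pi Set.univ fun _ => center K).map (mk' (Wsub K q)) := by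
  refine le_antisymm ?_ ?_
  · intro u hu
    obtain ⟨g, rfl⟩ := mk'_surjective (Wsub K q) u
    refine ⟨g, (mem_pi _).mpr fun i _ => mem_center_iff.mpr fun k => ?_, rfl⟩
    have hcomm := mem_center_iff.mp hu (mk' (Wsub K q) (Pi.mulSingle i k))
    have hW : (Pi.mulSingle i k * g)⁻¹ * (g * Pi.mulSingle i k) ∈ Wsub K q := by
      rw [← QuotientGroup.eq]
      simpa only [mk'_apply, mk_mul] using hcomm
    have hsingle : (Pi.mulSingle i k * g)⁻¹ * (g * Pi.mulSingle i k) =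
        Pi.mulSingle i ((k * g i)⁻¹ * (g i * k)) := by
      funext j
      by_cases hj : j = i
      · subst hj; simp
      · simp [hj]
    rwa [hsingle, mulSingle_mem_Wsub_iff, inv_mul_eq_one] at hW
  · rw [← Subgroup.center_pi]
    exact map_center_le_center_of_surjective (mk'_surjective _)

theorem center_quotient_Wsub_eq_range :
    center ((Fin q → K) ⧸ Wsub K q) = ((mk' (Wsub K q)).comp (centerPiEmbed K q)).range := by
  rw [center_quotient_Wsub, ← MonoidHom.map_range, range_centerPiEmbed]

theorem ker_mk'_comp_centerPiEmbed :
    ((mk' (Wsub K q)).comp (centerPiEmbed K q)).ker = (centerProdHom K q).ker := by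
  rw [← MonoidHom.comap_ker, ker_mk', Wsub,
    comap_map_eq_self_of_injective (centerPiEmbed_injective K q)]

noncomputable def centerQuotientWsubEquiv (hq : 0 < q) :
    center ((Fin q → K) ⧸ Wsub K q) ≃* center K :=
  (MulEquiv.subgroupCongr (center_quotient_Wsub_eq_range K q)).trans <|
    (quotientKerEquivRange _).symm.trans <|
      (quotientMulEquivOfEq (ker_mk'_comp_centerPiEmbed K q)).trans <|
        quotientKerEquivOfSurjective _ (centerProdHom_surjective K q hq)

noncomputable def quotientCenterQuotientWsubEquiv :
    ((Fin q → K) ⧸ Wsub K q) ⧸ center ((Fin q → K) ⧸ Wsub K q) ≃*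
      (Fin q → K ⧸ center K) :=
  (quotientMulEquivOfEq (center_quotient_Wsub K q)).trans <|
    (quotientQuotientEquivQuotient _ _ (Wsub_le_pi_center K q)).trans <|
      quotientPiEquivPiQuotient _

theorem center_of_quotient_by_W (hq : 0 < q) :
    Subgroup.center ((Fin q → K) ⧸ Wsub K q) =
      (Subgroup.pi Set.univ fun _ => Subgroup.center K).map
        (QuotientGroup.mk' (Wsub K q)) ∧
    Nonempty (Subgroup.center ((Fin q → K) ⧸ Wsub K q) ≃* Subgroup.center K) ∧
    Nonempty ((((Fin q → K) ⧸ Wsub K q) ⧸ Subgroup.center ((Fin q → K) ⧸ Wsub K q)) ≃*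
      (Fin q → K ⧸ Subgroup.center K)) :=
  ⟨center_quotient_Wsub K q, ⟨centerQuotientWsubEquiv K q hq⟩,
    ⟨quotientCenterQuotientWsubEquiv K q⟩⟩
end

section
/- Let K be a finite group with a faithful irreducible character μ, let Q = ⟨x⟩ be cyclic of prime order q with gcd(q, |Z(K)|) = 1, and let ρ be a faithful irreducible character of Q. Then the external product μ × ρ is a faithful irreducible character of K × Q. -/
/-!
Irreducibility: since `|ρ| = 1`, the character `μ × ρ` has the same norm `⟨χ, χ⟩ = 1` as `μ`.
Faithfulness: if `μ(k) ρ(x) = μ(1)`, then `μ(k) = ζ μ(1)` for the `q`-th root of unity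
`ζ = ρ(x)⁻¹`. The eigenvalues of `k` are roots of unity whose average is `ζ`, so `k` acts as the
scalar `ζ`; by faithfulness of `μ` the element `k` is then central with `k ^ q = 1`, and
`q ∤ |Z(K)|` forces `k = 1`. Finally `μ(1) ρ(x) = μ(1)` gives `ρ(x) = 1`, i.e. `x = 1`.
-/

/-- `χ : G → ℂ` is an irreducible (complex) character of `G` if it is the character of some
simple finite-dimensional complex representation of `G`. -/
def IsIrrChar (G : Type) [Group G] (χ : G → ℂ) : Prop :=
  ∃ V : FDRep ℂ G, CategoryTheory.Simple V ∧ χ = V.character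

open CategoryTheory

theorem Multiset.eq_one_of_norm_le_one_of_sum_eq_card {s : Multiset ℂ}
    (hs : ∀ z ∈ s, ‖z‖ ≤ 1) (hsum : s.sum = Multiset.card s) : ∀ z ∈ s, z = 1 := by
  by_contra! ⟨z₀, hz₀, hz₀_ne⟩
  have hre_lt : z₀.re < 1 := by
    refine lt_of_le_of_ne ((Complex.re_le_norm z₀).trans (hs z₀ hz₀)) fun hre => hz₀_ne ?_
    have him : z₀.im = 0 := Complex.abs_re_eq_norm.mp <|
      le_antisymm (Complex.abs_re_le_norm z₀) (by rw [hre, abs_one]; exact hs z₀ hz₀)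
    exact Complex.ext hre him
  have : (s.map Complex.re).sum < (s.map fun _ => (1 : ℝ)).sum :=
    Multiset.sum_lt_sum (fun z hz => (Complex.re_le_norm z).trans (hs z hz)) ⟨z₀, hz₀, hre_lt⟩
  have hre_sum : (s.map Complex.re).sum = Multiset.card s := by
    simpa [hsum] using (map_multiset_sum Complex.reAddGroupHom s).symm
  simp [hre_sum] at this

namespace Module.End

variable {K M : Type*} [Field K] [AddCommGroup M] [Module K M]

open Polynomial in
theorem isSemisimple_of_pow_eq_one [CharZero K] {f : End K M} {n : ℕ} (hn : n ≠ 0)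
    (hf : f ^ n = 1) : f.IsSemisimple := by
  refine isSemisimple_of_squarefree_aeval_eq_zero (p := X ^ n - 1) ?_ (by simp [hf])
  exact (X_pow_sub_one_separable_iff.mpr (Nat.cast_ne_zero.mpr hn)).squarefree

theorem HasEigenvalue.pow_eq_one {f : End K M} {μ : K} (hμ : f.HasEigenvalue μ) {n : ℕ}
    (hf : f ^ n = 1) : μ ^ n = 1 := by
  obtain ⟨v, hv⟩ := hμ.exists_hasEigenvector
  have : μ ^ n • v = (1 : K) • v := by rw [← hv.pow_apply, hf, one_smul, one_apply]
  exact smul_left_injective K hv.2 this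

theorem IsSemisimple.eq_one_of_forall_hasEigenvalue [IsAlgClosed K] [FiniteDimensional K M]
    {f : End K M} (hf : f.IsSemisimple) (h : ∀ μ, f.HasEigenvalue μ → μ = 1) : f = 1 := by
  have hs : (f - algebraMap K (End K M) 1).IsSemisimple := isSemisimple_sub_algebraMap_iff.mpr hf
  rw [map_one] at hs
  refine sub_eq_zero.mp <| (hs.eq_zero_iff_forall_eigenvalue).mpr fun μ hμ => ?_
  obtain ⟨v, hv⟩ := hμ.exists_hasEigenvector
  have : f.HasEigenvector (μ + 1) v :=
    ⟨mem_eigenspace_iff.mpr (by simpa [add_smul, sub_eq_iff_eq_add] using hv.apply_eq_smul), hv.2⟩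
  simpa using h _ (hasEigenvalue_of_hasEigenvector this)

variable {V : Type*} [AddCommGroup V] [Module ℂ V] [FiniteDimensional ℂ V]

theorem eq_one_of_pow_eq_one_of_trace_eq_finrank {f : End ℂ V} {n : ℕ} (hn : n ≠ 0)
    (hf : f ^ n = 1) (htr : LinearMap.trace ℂ V f = Module.finrank ℂ V) : f = 1 := by
  have hsplits : f.charpoly.Splits := IsAlgClosed.splits _
  have hroots : ∀ μ ∈ f.charpoly.roots, μ = 1 := by
    refine Multiset.eq_one_of_norm_le_one_of_sum_eq_card (fun μ hμ => ?_) ?_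
    · have hμ' : f.HasEigenvalue μ :=
        (hasEigenvalue_iff_isRoot_charpoly f μ).mpr (Polynomial.isRoot_of_mem_roots hμ)
      exact (Complex.norm_eq_one_of_pow_eq_one (hμ'.pow_eq_one hf) hn).le
    · rw [← trace_eq_sum_roots_charpoly_of_splits hsplits, htr,
        Polynomial.splits_iff_card_roots.mp hsplits, LinearMap.charpoly_natDegree]
  refine (isSemisimple_of_pow_eq_one hn hf).eq_one_of_forall_hasEigenvalue fun μ hμ => hroots μ ?_
  exact (Polynomial.mem_roots (LinearMap.charpoly_monic f).ne_zero).mpr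
    ((hasEigenvalue_iff_isRoot_charpoly f μ).mp hμ)

end Module.End

namespace FDRep

universe u

section

variable {k G H : Type u} [Field k] [Group G] [Group H]

noncomputable def extProd (V : FDRep k G) (χ : H →* kˣ) : FDRep k (G × H) :=
  FDRep.of (V := V)
    { toFun := fun gh => (χ gh.2 : k) • V.ρ gh.1
      map_one' := by simp
      map_mul' := fun gh gh' => by
        simp only [Prod.fst_mul, Prod.snd_mul, map_mul, Units.val_mul]
        exact (smul_mul_smul_comm (χ gh.2 : k) (V.ρ gh.1) (χ gh'.2 : k) (V.ρ gh'.1)).symm }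

theorem extProd_character (V : FDRep k G) (χ : H →* kˣ) (gh : G × H) :
    (V.extProd χ).character gh = V.character gh.1 * χ gh.2 := by
  change LinearMap.trace k V ((χ gh.2 : k) • V.ρ gh.1) = _
  rw [map_smul, smul_eq_mul, mul_comm]
  rfl

theorem simple_extProd [IsAlgClosed k] [CharZero k] [Finite G] [Finite H] (V : FDRep k G)
    [Simple V] (χ : H →* kˣ) : Simple (V.extProd χ) := by
  have := Fintype.ofFinite G
  have := Fintype.ofFinite H
  have hχ : ∀ h, (χ h : k) * χ h⁻¹ = 1 := fun h => by rw [map_inv, Units.mul_inv]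
  rw [simple_iff_char_is_norm_one, Fintype.sum_prod_type]
  calc ∑ g, ∑ h, (V.extProd χ).character (g, h) * (V.extProd χ).character (g, h)⁻¹
      = ∑ g, ∑ _h : H, V.character g * V.character g⁻¹ := by
        simp only [Prod.inv_mk, extProd_character, mul_mul_mul_comm _ (χ _ : k), hχ, mul_one]
    _ = Nat.card (G × H) := by
        simp only [Finset.sum_const, Finset.card_univ, nsmul_eq_mul, ← Finset.sum_mul,
          (simple_iff_char_is_norm_one V).mp inferInstance, Fintype.card_eq_nat_card,
          Nat.card_prod, Nat.cast_mul, mul_comm]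

theorem finrank_ne_zero_of_simple (V : FDRep k G) [Simple V] : Module.finrank k V ≠ 0 := by
  intro h
  have : Subsingleton V := Module.finrank_zero_iff.mp h
  refine Simple.not_isZero V ((Limits.IsZero.iff_id_eq_zero V).mpr ?_)
  ext v
  exact Subsingleton.elim _ _

theorem mem_center_of_ρ_eq_smul_one (V : FDRep k G) (hV : Function.Injective V.ρ) {g : G} {c : k}
    (h : V.ρ g = c • 1) : g ∈ Subgroup.center G :=
  Subgroup.mem_center_iff.mpr fun g' => hV <| by simp [h]

theorem eq_one_of_ρ_eq_smul_one (V : FDRep k G) (hV : Function.Injective V.ρ) {n : ℕ}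
    (hn : (Nat.card (Subgroup.center G)).Coprime n) {g : G} {ζ : k} (hζ : ζ ^ n = 1)
    (h : V.ρ g = ζ • 1) : g = 1 := by
  have hgn : g ^ n = 1 := hV <| by rw [map_pow, h, smul_pow, hζ, one_pow, one_smul, map_one]
  have hdvd := (Subgroup.center G).orderOf_dvd_natCard (mem_center_of_ρ_eq_smul_one V hV h)
  exact orderOf_eq_one_iff.mp <|
    (hn.coprime_dvd_left hdvd).eq_one_of_dvd (orderOf_dvd_of_pow_eq_one hgn)

end

theorem ρ_eq_smul_one_of_character_eq {G : Type} [Group G] [Finite G] (V : FDRep ℂ G) {g : G}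
    {ζ : ℂ} {n : ℕ} (hn : n ≠ 0) (hζ : ζ ^ n = 1)
    (h : V.character g = ζ * Module.finrank ℂ V) : V.ρ g = ζ • 1 := by
  have hζ₀ : ζ ≠ 0 := by rintro rfl; simp [hn] at hζ
  have hN : n * Nat.card G ≠ 0 := mul_ne_zero hn Nat.card_pos.ne'
  have hscaled : ζ⁻¹ • V.ρ g = 1 := by
    refine Module.End.eq_one_of_pow_eq_one_of_trace_eq_finrank hN ?_ ?_
    · rw [smul_pow, ← map_pow, pow_mul, pow_mul, pow_card_eq_one', inv_pow, hζ]
      simp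
    · rw [map_smul, smul_eq_mul]
      change ζ⁻¹ * V.character g = _
      rw [h, inv_mul_cancel_left₀ hζ₀]
  rw [← hscaled, smul_smul, mul_inv_cancel₀ hζ₀, one_smul]

end FDRep

theorem external_product_faithful_irreducible_general
    (K Q : Type) [Group K] [Finite K] [Group Q] [Finite Q]
    (q : ℕ) (hq : q.Prime) (hQ : Nat.card Q = q)
    (hcop : ¬ q ∣ Nat.card (Subgroup.center K))
    (μ : K → ℂ) (hμirr : IsIrrChar K μ)
    (hμfaithful : ∀ k : K, μ k = μ 1 → k = 1)
    (ρ : Q →* ℂˣ) (hρ : Function.Injective ρ) :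
    IsIrrChar (K × Q) (fun kx => μ kx.1 * (ρ kx.2 : ℂ)) ∧
    (∀ kx : K × Q, μ kx.1 * (ρ kx.2 : ℂ) = μ 1 → kx = 1) := by
  obtain ⟨V, hV, rfl⟩ := hμirr
  have hVinj : Function.Injective V.ρ := (injective_iff_map_eq_one _).mpr fun g hg =>
    hμfaithful g (by simp [FDRep.character, hg])
  refine ⟨⟨V.extProd ρ, V.simple_extProd ρ, funext fun kx => (V.extProd_character ρ kx).symm⟩, ?_⟩
  rintro ⟨k, x⟩ (h : V.character k * ρ x = V.character 1)
  set ζ : ℂ := ↑(ρ x)⁻¹ with hζ_def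
  have hζ : ζ ^ q = 1 := by
    rw [hζ_def, ← Units.val_pow_eq_pow_val, ← map_inv, ← map_pow, ← hQ, pow_card_eq_one', map_one,
      Units.val_one]
  have hk : k = 1 := by
    refine V.eq_one_of_ρ_eq_smul_one hVinj ((hq.coprime_iff_not_dvd.mpr hcop).symm) hζ
      (V.ρ_eq_smul_one_of_character_eq hq.ne_zero hζ ?_)
    rw [← V.char_one, ← h, hζ_def, mul_left_comm, Units.inv_mul, mul_one]
  subst hk
  have hdim : V.character 1 ≠ 0 := by
    rw [V.char_one]
    exact Nat.cast_ne_zero.mpr V.finrank_ne_zero_of_simple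
  have hx : ρ x = 1 := Units.ext <| mul_left_cancel₀ hdim (h.trans (mul_one _).symm)
  exact Prod.ext rfl (hρ (hx.trans (map_one ρ).symm))

/-- Let `K` be a finite group with a faithful irreducible character `μ`, let
`Q` be cyclic of prime order `q` with `q ∤ |Z(K)|`, and let `ρ` be a faithful (injective)
linear character of `Q`.  Then the external product `μ × ρ`, i.e.
`(k, x) ↦ μ(k)·ρ(x)`, is a faithful irreducible character of `K × Q`. -/
theorem external_product_faithful_irreducible
    (K Q : Type) [Group K] [Finite K] [Group Q] [Finite Q] [IsCyclic Q]
    (q : ℕ) (hq : q.Prime) (hQ : Nat.card Q = q)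
    (hcop : ¬ q ∣ Nat.card (Subgroup.center K))
    (μ : K → ℂ) (hμirr : IsIrrChar K μ)
    (hμfaithful : ∀ k : K, μ k = μ 1 → k = 1)
    (ρ : Q →* ℂˣ) (hρ : Function.Injective ρ) :
    IsIrrChar (K × Q) (fun kx => μ kx.1 * (ρ kx.2 : ℂ)) ∧
    (∀ kx : K × Q, μ kx.1 * (ρ kx.2 : ℂ) = μ 1 → kx = 1) :=
  external_product_faithful_irreducible_general K Q q hq hQ hcop μ hμirr hμfaithful ρ hρ
end

section
/- Let H be a finite p'-group acting on a finite abelian p-group V. Then the permutation actions of H on V and on Irr(V) (the dual group) are isomorphic as H-sets. In particular, for each v ∈ V there is μ ∈ Irr(V) with H_v = H_μ, and the numbers of orbits coincide. -/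
/-!
Burnside: finite `G`-sets `X`, `Y` with `|X^U| = |Y^U|` for every subgroup `U` are isomorphic.
Indeed, a subgroup `U` maximal among those with a fixed point on `X` (equivalently, on `Y`) is the
stabilizer of every point it fixes, so some `x ∈ X` and `y ∈ Y` have the same stabilizer; their
orbits are then isomorphic, and removing them keeps the fixed-point counts equal.

For `V` it remains to count fixed points. If `|U| = n` is coprime to `|V|`, the norm map
`N v = ∏_{u ∈ U} u • v` is `v ↦ v ^ n` on `C_V(U)`, hence maps onto `C_V(U)`, and a
character is `U`-invariant iff it is trivial on `ker N`. So `|Irr(V)^U| = |V / ker N| = |C_V(U)|`.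
-/

open MulAction

namespace MulAction

def Isomorphic (G X Y : Type*) [SMul G X] [SMul G Y] : Prop :=
  ∃ e : X ≃ Y, ∀ (g : G) (x : X), e (g • x) = g • e x

section

variable {G X Y Z X' Y' : Type*} [SMul G X] [SMul G Y] [SMul G Z] [SMul G X'] [SMul G Y']

theorem Isomorphic.symm (h : Isomorphic G X Y) : Isomorphic G Y X := by
  obtain ⟨e, he⟩ := h
  exact ⟨e.symm, fun g y => e.injective (by simp [he])⟩

theorem Isomorphic.trans (h₁ : Isomorphic G X Y) (h₂ : Isomorphic G Y Z) :
    Isomorphic G X Z := by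
  obtain ⟨e₁, he₁⟩ := h₁
  obtain ⟨e₂, he₂⟩ := h₂
  exact ⟨e₁.trans e₂, fun g x => by simp [he₁, he₂]⟩

theorem Isomorphic.sumCongr (h₁ : Isomorphic G X X') (h₂ : Isomorphic G Y Y') :
    Isomorphic G (X ⊕ Y) (X' ⊕ Y') := by
  obtain ⟨e₁, he₁⟩ := h₁
  obtain ⟨e₂, he₂⟩ := h₂
  refine ⟨e₁.sumCongr e₂, fun g => ?_⟩
  rintro (x | y) <;> simp [he₁, he₂]

end

theorem Isomorphic.card_fixedPoints_eq {G X Y : Type*} [Group G] [MulAction G X]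
    [MulAction G Y] (h : Isomorphic G X Y) (U : Subgroup G) :
    Nat.card (fixedPoints U X) = Nat.card (fixedPoints U Y) := by
  obtain ⟨e, he⟩ := h
  exact Nat.card_congr (e.subtypeEquiv fun x => by
    simp only [mem_fixedPoints, Subgroup.smul_def, ← he, e.apply_eq_iff_eq])

theorem card_fixedPoints_sum {M X Y : Type*} [Monoid M] [MulAction M X] [MulAction M Y]
    [Finite X] [Finite Y] :
    Nat.card (fixedPoints M (X ⊕ Y)) =
      Nat.card (fixedPoints M X) + Nat.card (fixedPoints M Y) := by
  rw [← Nat.card_sum]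
  exact Nat.card_congr (Equiv.subtypeSum.trans (Equiv.sumCongr
    (Equiv.subtypeEquivRight fun x => by simp [mem_fixedPoints, Sum.smul_inl])
    (Equiv.subtypeEquivRight fun x => by simp [mem_fixedPoints, Sum.smul_inr])))

end MulAction

namespace SubMulAction

variable {G X : Type*} [Group G] [MulAction G X]

def compl (p : SubMulAction G X) : SubMulAction G X where
  carrier := (p : Set X)ᶜ
  smul_mem' g x hx hgx := hx (by simpa using p.smul_mem g⁻¹ hgx)

variable (G) in
def orbit (x : X) : SubMulAction G X where
  carrier := MulAction.orbit G x
  smul_mem' g _ hy := MulAction.mapsTo_smul_orbit g x hy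

theorem isomorphic_sum_compl (p : SubMulAction G X) : Isomorphic G (p ⊕ p.compl) X := by
  classical
  refine ⟨Equiv.sumCompl (· ∈ p), fun g => ?_⟩
  rintro (x | x) <;> rfl

theorem isomorphic_quotient_stabilizer_orbit (x : X) :
    Isomorphic G (G ⧸ stabilizer G x) (orbit G x) :=
  ⟨(orbitEquivQuotientStabilizer G x).symm,
    fun g q => Subtype.ext (ofQuotientStabilizer_smul G x g q)⟩

theorem isomorphic_orbit_of_stabilizer_eq {Y : Type*} [MulAction G Y] {x : X} {y : Y}
    (h : stabilizer G x = stabilizer G y) : Isomorphic G (orbit G x) (orbit G y) :=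
  (isomorphic_quotient_stabilizer_orbit x).symm.trans
    (h ▸ isomorphic_quotient_stabilizer_orbit y)

variable [Finite X] (p : SubMulAction G X)

theorem card_add_card_compl : Nat.card p + Nat.card p.compl = Nat.card X := by
  classical
  rw [← Nat.card_sum]
  exact Nat.card_congr (Equiv.sumCompl (· ∈ p))

theorem card_fixedPoints_add_card_fixedPoints_compl (U : Subgroup G) :
    Nat.card (fixedPoints U p) + Nat.card (fixedPoints U p.compl) = Nat.card (fixedPoints U X) := by
  rw [← card_fixedPoints_sum]
  exact (isomorphic_sum_compl p).card_fixedPoints_eq U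

end SubMulAction

namespace MulAction

variable {G X Y : Type*} [Group G] [MulAction G X] [MulAction G Y]

theorem stabilizer_eq_of_maximal {U : Subgroup G}
    (hU : Maximal (fun V : Subgroup G => (fixedPoints V X).Nonempty) U) {x : X}
    (hx : x ∈ fixedPoints U X) : stabilizer G x = U :=
  (hU.eq_of_le ⟨x, fun g => g.2⟩ fun g hg => hx ⟨g, hg⟩).symm

variable [Finite X] [Finite Y]

theorem nonempty_fixedPoints_iff
    (h : ∀ U : Subgroup G, Nat.card (fixedPoints U X) = Nat.card (fixedPoints U Y))
    (U : Subgroup G) : (fixedPoints U X).Nonempty ↔ (fixedPoints U Y).Nonempty := by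
  rw [← Set.ncard_pos (Set.toFinite _), ← Set.ncard_pos (Set.toFinite _),
    ← Nat.card_coe_set_eq, ← Nat.card_coe_set_eq, h]

theorem exists_stabilizer_eq [Finite G]
    (h : ∀ U : Subgroup G, Nat.card (fixedPoints U X) = Nat.card (fixedPoints U Y)) (x₀ : X) :
    ∃ (x : X) (y : Y), stabilizer G x = stabilizer G y := by
  obtain ⟨U, -, hU⟩ := Finite.exists_le_maximal
    (p := fun V : Subgroup G => (fixedPoints V X).Nonempty) (a := stabilizer G x₀)
    ⟨x₀, fun g => g.2⟩
  have hUY : Maximal (fun V : Subgroup G => (fixedPoints V Y).Nonempty) U := by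
    simpa only [nonempty_fixedPoints_iff h] using hU
  obtain ⟨x, hx⟩ := hU.prop
  obtain ⟨y, hy⟩ := hUY.prop
  exact ⟨x, y, (stabilizer_eq_of_maximal hU hx).trans (stabilizer_eq_of_maximal hUY hy).symm⟩

theorem isomorphic_of_card_fixedPoints_eq [Finite G]
    (h : ∀ U : Subgroup G, Nat.card (fixedPoints U X) = Nat.card (fixedPoints U Y)) :
    Isomorphic G X Y := by
  induction hn : Nat.card X using Nat.strong_induction_on generalizing X Y with
  | _ n ih =>
  rcases isEmpty_or_nonempty X with hX | ⟨⟨x₀⟩⟩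
  · have : IsEmpty Y := ⟨fun y =>
      (exists_stabilizer_eq (fun U => (h U).symm) y).elim fun _ ⟨x, _⟩ => isEmptyElim x⟩
    exact ⟨Equiv.equivOfIsEmpty X Y, fun _ x => isEmptyElim x⟩
  obtain ⟨x, y, hxy⟩ := exists_stabilizer_eq h x₀
  have horbit := SubMulAction.isomorphic_orbit_of_stabilizer_eq hxy
  have hcompl : Isomorphic G (SubMulAction.orbit G x).compl (SubMulAction.orbit G y).compl := by
    refine ih _ ?_ (fun U => ?_) rfl
    · have : Nonempty (SubMulAction.orbit G x) := ⟨⟨x, mem_orbit_self x⟩⟩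
      have : 0 < Nat.card (SubMulAction.orbit G x) := Nat.card_pos
      have := (SubMulAction.orbit G x).card_add_card_compl
      omega
    · have := (SubMulAction.orbit G x).card_fixedPoints_add_card_fixedPoints_compl U
      have := (SubMulAction.orbit G y).card_fixedPoints_add_card_fixedPoints_compl U
      have := horbit.card_fixedPoints_eq U
      have := h U
      omega
  exact (SubMulAction.isomorphic_sum_compl _).symm.trans
    ((horbit.sumCongr hcompl).trans (SubMulAction.isomorphic_sum_compl _))

end MulAction

namespace MulDistribMulAction

section Dual

variable {G V M : Type*} [Group G] [Monoid V] [MulDistribMulAction G V] [MulOneClass M]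

instance : MulAction G (V →* M) where
  smul g μ := μ.comp (toMonoidHom V g⁻¹)
  one_smul μ := MonoidHom.ext fun v =>
    show μ ((1 : G)⁻¹ • v) = μ v by rw [inv_one, one_smul]
  mul_smul g h μ := MonoidHom.ext fun v =>
    show μ ((g * h)⁻¹ • v) = μ (h⁻¹ • g⁻¹ • v) by rw [mul_inv_rev, mul_smul]

theorem smul_monoidHom_apply (g : G) (μ : V →* M) (v : V) : (g • μ) v = μ (g⁻¹ • v) :=
  rfl

theorem smul_monoidHom_eq_self_iff {g : G} {μ : V →* M} :
    g • μ = μ ↔ ∀ v, μ (g • v) = μ v := by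
  refine ⟨fun h v => ?_, fun h => MonoidHom.ext fun v => ?_⟩
  · have := DFunLike.congr_fun h (g • v)
    rwa [smul_monoidHom_apply, inv_smul_smul, eq_comm] at this
  · rw [smul_monoidHom_apply, ← h, smul_inv_smul]

end Dual

section Norm

variable (G V : Type*) [Group G] [Fintype G] [CommGroup V] [MulDistribMulAction G V]

noncomputable def norm : V →* V := ∏ g : G, toMonoidHom V g

variable {G V}

theorem norm_apply (v : V) : norm G V v = ∏ g : G, g • v := by
  simp [norm]

theorem norm_smul (g : G) (v : V) : norm G V (g • v) = norm G V v := by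
  simp only [norm_apply, smul_smul]
  exact Equiv.prod_comp (Equiv.mulRight g) fun h => h • v

theorem norm_mem_fixedPoints (v : V) : norm G V v ∈ fixedPoints G V := fun g => by
  rw [norm_apply, Finset.smul_prod_perm]

theorem norm_of_mem_fixedPoints {v : V} (hv : v ∈ fixedPoints G V) :
    norm G V v = v ^ Nat.card G := by
  simp [norm_apply, hv _, Nat.card_eq_fintype_card]

theorem range_norm (hc : (Nat.card V).Coprime (Nat.card G)) :
    (norm G V).range = FixedPoints.subgroup G V := by
  refine le_antisymm (by rintro _ ⟨v, rfl⟩; exact norm_mem_fixedPoints v) fun c hc' => ?_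
  -- `(powCoprime hc).symm c` is an integer power of `c` whose `|G|`-th power is `c`
  have hroot : (powCoprime hc).symm c ∈ FixedPoints.subgroup G V := zpow_mem hc' _
  refine ⟨(powCoprime hc).symm c, ?_⟩
  rw [norm_of_mem_fixedPoints hroot]
  exact (powCoprime hc).apply_symm_apply c

theorem mem_fixedPoints_monoidHom_iff {M : Type*} [CommMonoid M] [Finite V]
    (hc : (Nat.card V).Coprime (Nat.card G)) {μ : V →* M} :
    μ ∈ fixedPoints G (V →* M) ↔ (norm G V).ker ≤ μ.ker := by
  simp only [mem_fixedPoints, smul_monoidHom_eq_self_iff]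
  refine ⟨fun hμ v hv => ?_, fun h g v => ?_⟩
  · have hG : μ v ^ Nat.card G = 1 :=
      calc μ v ^ Nat.card G = μ (norm G V v) := by
            simp [norm_apply, map_prod, hμ, Nat.card_eq_fintype_card]
        _ = 1 := by rw [MonoidHom.mem_ker.mp hv, map_one]
    have hV : μ v ^ Nat.card V = 1 := by rw [← map_pow, pow_card_eq_one', map_one]
    have := pow_gcd_eq_one.mpr ⟨hV, hG⟩
    rwa [hc.gcd_eq_one, pow_one] at this
  · have hv : g • v * v⁻¹ ∈ (norm G V).ker := by simp [norm_smul]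
    calc μ (g • v) = μ (g • v * v⁻¹ * v) := by rw [inv_mul_cancel_right]
      _ = μ v := by rw [map_mul, h hv, one_mul]

theorem card_fixedPoints_monoidHom_units (M : Type*) [CommMonoid M] [Finite V]
    [HasEnoughRootsOfUnity M (Monoid.exponent V)] (hc : (Nat.card V).Coprime (Nat.card G)) :
    Nat.card (fixedPoints G (V →* Mˣ)) = Nat.card (fixedPoints G V) := by
  have hfix : fixedPoints G (V →* Mˣ) = (MonoidHom.domRestrictHom (norm G V).ker Mˣ).ker := by
    ext μ
    simp [mem_fixedPoints_monoidHom_iff hc, SetLike.le_def]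
  calc Nat.card (fixedPoints G (V →* Mˣ))
      = Nat.card (MonoidHom.domRestrictHom (norm G V).ker Mˣ).ker := by rw [hfix]; rfl
    _ = Nat.card (V ⧸ (norm G V).ker) := CommGroup.card_domRestrictHom_ker M _
    _ = Nat.card (norm G V).range := Nat.card_congr (QuotientGroup.quotientKerEquivRange _).toEquiv
    _ = Nat.card (fixedPoints G V) := by rw [range_norm hc]; rfl

end Norm

end MulDistribMulAction

open MulDistribMulAction in
/-- Let `H` be a finite `p'`-group acting by automorphisms on a finite abelian
`p`-group `V`.  Then the permutation actions of `H` on `V` and on the dual group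
`Irr(V) = Hom(V, ℂˣ)` (with action `(h·μ)(v) = μ(h⁻¹·v)`) are isomorphic as `H`-sets:
there is an equivariant bijection `f`.  In particular, for every `v` the stabilizer of `v`
equals the stabilizer of `μ = f v`, and the numbers of orbits on both sides coincide. -/
theorem dual_action_permutation_isomorphic
    (p : ℕ) (hp : p.Prime) (H V : Type) [Group H] [Finite H] [CommGroup V] [Finite V]
    (hV : IsPGroup p V) (hH : ¬ p ∣ Nat.card H) [MulDistribMulAction H V] :
    ∃ f : V ≃ (V →* ℂˣ),
      (∀ (h : H) (v : V) (w : V), f (h • v) w = f v (h⁻¹ • w)) ∧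
      (∀ v : V, {h : H | h • v = v} = {h : H | ∀ w : V, f v (h • w) = f v w}) := by
  have hc : (Nat.card V).Coprime (Nat.card H) := by
    have := Fact.mk hp
    obtain ⟨k, hk⟩ := hV.exists_card_eq
    exact hk ▸ ((hp.coprime_iff_not_dvd).2 hH).pow_left k
  have : NeZero (Monoid.exponent V : ℂ) :=
    ⟨by exact_mod_cast Monoid.exponent_ne_zero_of_finite⟩
  have : Finite (V →* ℂˣ) :=
    .of_equiv V (CommGroup.monoidHom_mulEquiv_of_hasEnoughRootsOfUnity V ℂ).some.symm.toEquiv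
  obtain ⟨f, hf⟩ : Isomorphic H V (V →* ℂˣ) :=
    isomorphic_of_card_fixedPoints_eq fun U => by
      have := Fintype.ofFinite U
      exact (card_fixedPoints_monoidHom_units ℂ
        (hc.coprime_dvd_right U.card_subgroup_dvd_card)).symm
  refine ⟨f, fun h v w => by rw [hf]; rfl, fun v => ?_⟩
  ext h
  simp only [Set.mem_ofPred_eq, ← smul_monoidHom_eq_self_iff, ← hf, f.apply_eq_iff_eq]
end
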